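/- arXiv:1712.09286 — 4 statements merged into one kernel-verified Lean document; each statement's English description precedes it below -/
import Mathlib

section
/- Pointwise form of the Engel characterization for plane fields tangent to ∂_t (Proposition 2.5 of the paper): Let H : ℝ³ × ℝ → ℝ³ be a smooth map with ‖H(p,t)‖ = 1 for all (p,t). On ℝ⁴ = ℝ³ × ℝ define the vector fields T(p,t) = (0,0,0,1) (i.e. ∂_t) and V(p,t) = (H(p,t), 0). For fixed t let h_t, k_t : ℝ³ → ℝ³ be the slice vector fields h_t(p) = H(p,t) and k_t(p) = ∂_t H(p,t). Then for every q = (p,t) ∈ ℝ³ × ℝ the following are equivalent: (A) the vectors T, V(q), [T,V](q) are linearly independent in ℝ⁴ and the five vectors T, V(q), [T,V](q), [T,[T,V]](q), [V,[T,V]](q) span ℝ⁴; (B) the vectors H(q) and ∂_t H(q) are linearly independent in ℝ³, and at least one of the following holds: (i) H(q), ∂_t H(q), ∂_t² H(q) are linearly independent in ℝ³, or (ii) H(q), ∂_t H(q), [h_t, k_t](p) are linearly independent in ℝ³. -/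
open Real

/-- Lie bracket of vector fields on a normed space:
`[V, V'](p) = DV'(p)(V(p)) − DV(p)(V'(p))`. -/
noncomputable def vbracket {E : Type*} [NormedAddCommGroup E] [NormedSpace ℝ E]
    (V V' : E → E) : E → E :=
  fun p => fderiv ℝ V' p (V p) - fderiv ℝ V p (V' p)

/-- The vector field `T = ∂_t` on `ℝ⁴ = ℝ³ × ℝ`. -/
def Tfield : ((Fin 3 → ℝ) × ℝ) → ((Fin 3 → ℝ) × ℝ) := fun _ => (0, 1)

/-- The horizontal vector field `V(p,t) = (H(p,t), 0)` determined by `H`. -/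
def Vfield (H : ((Fin 3 → ℝ) × ℝ) → (Fin 3 → ℝ)) :
    ((Fin 3 → ℝ) × ℝ) → ((Fin 3 → ℝ) × ℝ) := fun q => (H q, 0)

/-- `∂_t H`, the derivative of `H` in the `t`-direction. -/
noncomputable def dtH (H : ((Fin 3 → ℝ) × ℝ) → (Fin 3 → ℝ)) :
    ((Fin 3 → ℝ) × ℝ) → (Fin 3 → ℝ) := fun q => fderiv ℝ H q (0, 1)


abbrev F3' := Fin 3 → ℝ
abbrev E4' := (Fin 3 → ℝ) × ℝ

section LA
open Submodule Set

open Submodule Set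



lemma range_pair (a b : F3') :
    (LinearMap.inl ℝ F3' ℝ) ∘ ![a, b] = ![((a,0) : E4'), (b,0)] := by
  funext i; fin_cases i <;> simp

lemma li_pair_iff (a b : F3') :
    LinearIndependent ℝ ![((a,0) : E4'), (b,0)] ↔ LinearIndependent ℝ ![a, b] := by
  rw [← range_pair]
  constructor
  · exact fun h => LinearIndependent.of_comp (LinearMap.inl ℝ F3' ℝ) h
  · intro h
    exact h.map' (LinearMap.inl ℝ F3' ℝ) Submodule.ker_inl

lemma T_not_mem (s : Set E4') (hs : ∀ x ∈ s, x.2 = 0) :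
    ((0,1) : E4') ∉ span ℝ s := by
  intro hmem
  have hle : span ℝ s ≤ LinearMap.ker (LinearMap.snd ℝ F3' ℝ) := by
    rw [span_le]; intro x hx; simpa using hs x hx
  simpa using hle hmem

lemma laA (a b : F3') :
    LinearIndependent ℝ ![((0,1) : E4'), (a,0), (b,0)] ↔ LinearIndependent ℝ ![a, b] := by
  have : (![((0,1) : E4'), (a,0), (b,0)]) = Fin.cons ((0,1) : E4') ![(a,0), (b,0)] := rfl
  rw [this, linearIndependent_fin_cons, li_pair_iff]
  constructor
  · exact fun h => h.1
  · intro h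
    refine ⟨h, T_not_mem _ ?_⟩
    intro x hx
    simp only [Set.range, Matrix.cons_val_fin_one] at hx
    obtain ⟨i, rfl⟩ := hx
    fin_cases i <;> rfl

lemma laB (a b c d : F3') :
    span ℝ ({((0,1) : E4'), (a,0), (b,0), (c,0), (d,0)} : Set E4') = ⊤ ↔
      span ℝ ({a, b, c, d} : Set F3') = ⊤ := by
  constructor
  · intro h
    have := congrArg (Submodule.map (LinearMap.fst ℝ F3' ℝ)) h
    rw [Submodule.map_span, Submodule.map_top, LinearMap.range_eq_top.2 Prod.fst_surjective] at this
    rw [show (LinearMap.fst ℝ F3' ℝ) '' {((0,1) : E4'), (a,0), (b,0), (c,0), (d,0)} =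
        ({0, a, b, c, d} : Set F3') by
      simp [Set.image_insert_eq]] at this
    rwa [span_insert_zero] at this
  · intro h
    rw [eq_top_iff]
    rintro ⟨x, s⟩ -
    have hx : x ∈ span ℝ ({a, b, c, d} : Set F3') := h ▸ trivial
    have h1 : ((x, 0) : E4') ∈ span ℝ ({((0,1) : E4'), (a,0), (b,0), (c,0), (d,0)} : Set E4') := by
      have : ((x,0) : E4') ∈ Submodule.map (LinearMap.inl ℝ F3' ℝ)
          (span ℝ ({a, b, c, d} : Set F3')) := ⟨x, hx, rfl⟩
      rw [Submodule.map_span] at this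
      refine span_mono ?_ this
      intro y hy
      simp only [Set.image_insert_eq, Set.image_singleton] at hy
      simp only [LinearMap.inl_apply] at hy
      rcases hy with rfl | rfl | rfl | rfl <;> simp [Set.mem_insert_iff]
    have h2 : ((0,1) : E4') ∈ span ℝ ({((0,1) : E4'), (a,0), (b,0), (c,0), (d,0)} : Set E4') :=
      subset_span (by simp)
    have : ((x, s) : E4') = (x, 0) + s • ((0,1) : E4') := by simp
    rw [this]
    exact add_mem h1 (smul_mem _ _ h2)

lemma snoc3 (a b x : F3') : (Fin.snoc ![a,b] x : Fin 3 → F3') = ![a,b,x] := by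
  funext i; fin_cases i <;> simp [Fin.snoc] <;> rfl

lemma li3_iff (a b x : F3') :
    LinearIndependent ℝ ![a, b, x] ↔
      LinearIndependent ℝ ![a, b] ∧ x ∉ span ℝ ({a, b} : Set F3') := by
  rw [← snoc3, linearIndependent_fin_snoc]
  have : Set.range ![a, b] = ({a, b} : Set F3') := by
    ext y; constructor
    · rintro ⟨i, rfl⟩; fin_cases i <;> simp
    · rintro (rfl | rfl)
      · exact ⟨0, rfl⟩
      · exact ⟨1, rfl⟩
  rw [this]

lemma laC (a b c d : F3') (hab : LinearIndependent ℝ ![a, b]) :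
    span ℝ ({a, b, c, d} : Set F3') = ⊤ ↔
      (LinearIndependent ℝ ![a, b, c] ∨ LinearIndependent ℝ ![a, b, d]) := by
  constructor
  · intro h
    by_contra hcon
    push_neg at hcon
    obtain ⟨h1, h2⟩ := hcon
    rw [li3_iff] at h1 h2
    have hc : c ∈ span ℝ ({a, b} : Set F3') := by tauto
    have hd : d ∈ span ℝ ({a, b} : Set F3') := by tauto
    have hle : span ℝ ({a, b, c, d} : Set F3') ≤ span ℝ ({a, b} : Set F3') := by
      rw [span_le]
      rintro x (rfl | rfl | rfl | rfl)
      · exact subset_span (by simp)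
      · exact subset_span (by simp)
      · exact hc
      · exact hd
    rw [h] at hle
    have hfr : Module.finrank ℝ (span ℝ ({a, b} : Set F3')) ≤ 2 := by
      have := finrank_span_le_card (R := ℝ) ({a, b} : Set F3')
      refine this.trans ?_
      have : ({a,b} : Set F3').toFinset ⊆ {a, b} := by
        intro x; simp
      calc ({a,b} : Set F3').toFinset.card ≤ ({a,b} : Finset F3').card := Finset.card_le_card this
        _ ≤ 2 := Finset.card_insert_le _ _ |>.trans (by simp)
    have htop : span ℝ ({a, b} : Set F3') = ⊤ := eq_top_iff.2 hle
    rw [htop] at hfr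
    simp [Module.finrank_fin_fun] at hfr
  · intro h
    have key : ∀ x : F3', LinearIndependent ℝ ![a, b, x] →
        ({a, b, x} : Set F3') ⊆ ({a, b, c, d} : Set F3') →
        span ℝ ({a, b, c, d} : Set F3') = ⊤ := by
      intro x hli hsub
      have hcard : Fintype.card (Fin 3) = Module.finrank ℝ F3' := by
        simp [Module.finrank_fin_fun]
      have := hli.span_eq_top_of_card_eq_finrank hcard
      have hr : Set.range ![a, b, x] = ({a, b, x} : Set F3') := by
        ext y; constructor
        · rintro ⟨i, rfl⟩; fin_cases i <;> simp
        · rintro (rfl | rfl | rfl)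
          · exact ⟨0, rfl⟩
          · exact ⟨1, rfl⟩
          · exact ⟨2, rfl⟩
      rw [hr] at this
      rw [eq_top_iff, ← this]
      exact span_mono hsub
    rcases h with h | h
    · exact key c h (by intro y; simp; tauto)
    · exact key d h (by intro y; simp; tauto)

lemma laMain (a b c d : F3') :
    (LinearIndependent ℝ ![((0,1) : E4'), (a,0), (b,0)] ∧
      span ℝ ({((0,1) : E4'), (a,0), (b,0), (c,0), (d,0)} : Set E4') = ⊤) ↔
    (LinearIndependent ℝ ![a, b] ∧
      (LinearIndependent ℝ ![a, b, c] ∨ LinearIndependent ℝ ![a, b, d])) := by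
  rw [laA, laB]
  constructor
  · rintro ⟨h1, h2⟩
    exact ⟨h1, (laC a b c d h1).1 h2⟩
  · rintro ⟨h1, h2⟩
    exact ⟨h1, (laC a b c d h1).2 h2⟩

end LA


lemma fderiv_Vfield (f : E4' → F3') (hf : Differentiable ℝ f) (q v) :
    fderiv ℝ (Vfield f) q v = (fderiv ℝ f q v, 0) := by
  have h : HasFDerivAt (Vfield f) ((fderiv ℝ f q).prod 0) q :=
    HasFDerivAt.prodMk (hf q).hasFDerivAt (hasFDerivAt_const 0 q)
  rw [h.fderiv]
  rfl

lemma bracketTV (f : E4' → F3') (hf : Differentiable ℝ f) :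
    vbracket Tfield (Vfield f) = Vfield (dtH f) := by
  funext q
  unfold vbracket Tfield
  rw [fderiv_fun_const]
  simp only [Pi.zero_apply, ContinuousLinearMap.zero_apply, sub_zero, fderiv_Vfield f hf]
  rfl

lemma dtH_smooth (f : E4' → F3') (hf : ContDiff ℝ (⊤ : ℕ∞) f) : ContDiff ℝ (⊤ : ℕ∞) (dtH f) :=
  (hf.fderiv_right (by simp)).clm_apply contDiff_const

lemma slice_fderiv (f : E4' → F3') (hf : Differentiable ℝ f) (p : F3') (t : ℝ) (v : F3') :
    fderiv ℝ (fun p => f (p, t)) p v = fderiv ℝ f (p, t) (v, 0) := by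
  have h0 : HasFDerivAt (fun p : F3' => ((p, t) : E4'))
      ((ContinuousLinearMap.id ℝ F3').prod 0) p :=
    HasFDerivAt.prodMk (hasFDerivAt_id p) (hasFDerivAt_const t p)
  have h1 : HasFDerivAt (fun p : F3' => f (p, t))
      ((fderiv ℝ f (p, t)).comp ((ContinuousLinearMap.id ℝ F3').prod 0)) p :=
    (hf (p, t)).hasFDerivAt.comp p h0
  rw [h1.fderiv]
  simp

lemma bracketVV (H : E4' → F3') (hH : ContDiff ℝ (⊤ : ℕ∞) H) (q : E4') :
    vbracket (Vfield H) (Vfield (dtH H)) q =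
      (fderiv ℝ (dtH H) q (H q, 0) - fderiv ℝ H q (dtH H q, 0), 0) := by
  have hHd := hH.differentiable (by simp)
  have hKd := (dtH_smooth H hH).differentiable (by simp)
  unfold vbracket
  rw [fderiv_Vfield _ hKd, fderiv_Vfield _ hHd]
  show ((fderiv ℝ (dtH H) q (H q, 0), (0:ℝ)) - (fderiv ℝ H q (dtH H q, 0), (0:ℝ))) = _
  rw [Prod.mk_sub_mk, sub_zero]

lemma bracketSlice (H : E4' → F3') (hH : ContDiff ℝ (⊤ : ℕ∞) H) (q : E4') :
    vbracket (fun p => H (p, q.2)) (fun p => dtH H (p, q.2)) q.1 =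
      fderiv ℝ (dtH H) q (H q, 0) - fderiv ℝ H q (dtH H q, 0) := by
  have hHd := hH.differentiable (by simp)
  have hKd := (dtH_smooth H hH).differentiable (by simp)
  unfold vbracket
  rw [slice_fderiv _ hKd, slice_fderiv _ hHd]

/-- Proposition 2.5 (pointwise form): for a smooth unit-vector-valued map
`H : ℝ³ × ℝ → ℝ³`, the plane field spanned by `∂_t` and `V = (H, 0)` satisfies the
Engel condition at `q` (condition (A)) if and only if `H(q)` and `∂_t H(q)` are
linearly independent and either (i) `H(q), ∂_t H(q), ∂_t² H(q)` are linearly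
independent, or (ii) `H(q), ∂_t H(q), [h_t, k_t](p)` are linearly independent, where
`h_t(p) = H(p,t)` and `k_t(p) = ∂_t H(p,t)` are the slice vector fields on ℝ³. -/
theorem engel_characterisation_pointwise
    (H : ((Fin 3 → ℝ) × ℝ) → (Fin 3 → ℝ))
    (hH : ContDiff ℝ (⊤ : ℕ∞) H)
    (hunit : ∀ q, ‖H q‖ = 1) :
    ∀ q : (Fin 3 → ℝ) × ℝ,
      -- (A): the Engel condition at q for the plane field ⟨T, V⟩
      ((LinearIndependent ℝ
          ![Tfield q, Vfield H q, vbracket Tfield (Vfield H) q]) ∧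
        Submodule.span ℝ
          ({Tfield q, Vfield H q, vbracket Tfield (Vfield H) q,
            vbracket Tfield (vbracket Tfield (Vfield H)) q,
            vbracket (Vfield H) (vbracket Tfield (Vfield H)) q} :
              Set ((Fin 3 → ℝ) × ℝ)) = ⊤)
      ↔
      -- (B): H, ∂_t H independent, and (i) or (ii)
      ((LinearIndependent ℝ ![H q, dtH H q]) ∧
        (LinearIndependent ℝ ![H q, dtH H q, dtH (dtH H) q] ∨
          LinearIndependent ℝ
            ![H q, dtH H q,
              vbracket (fun p => H (p, q.2)) (fun p => dtH H (p, q.2)) q.1])) := by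
  intro q
  have hHd : Differentiable ℝ H := hH.differentiable (by simp)
  have hKd : Differentiable ℝ (dtH H) := (dtH_smooth H hH).differentiable (by simp)
  have hb1 : vbracket Tfield (Vfield H) = Vfield (dtH H) := bracketTV H hHd
  have hb2 : vbracket Tfield (Vfield (dtH H)) = Vfield (dtH (dtH H)) := bracketTV (dtH H) hKd
  rw [hb1, hb2, bracketVV H hH q, bracketSlice H hH q]
  exact laMain (H q) (dtH H q) (dtH (dtH H) q)
    (fderiv ℝ (dtH H) q (H q, 0) - fderiv ℝ H q (dtH H q, 0))
end

section
/- Transverse cylinders over transverse curves (Lemma 3.4, 'lem:constantProfile'): Let η = (η_x, η_z, η_w) : ℝ → ℝ³ be a smooth curve satisfying η_x'(θ) − η_w(θ)·η_z'(θ) > 0 for all θ (i.e. η is positively transverse to ker(dx − w dz) in ℝ³). Define S : ℝ² → ℝ⁴ by S(y,θ) = (y, η_x(θ), η_z(θ), η_w(θ)). Then for every (y,θ) the four vectors ∂S/∂y(y,θ), ∂S/∂θ(y,θ), W(S(y,θ)), X(S(y,θ)) form a basis of ℝ⁴; that is, the cylinder S is everywhere transverse to the standard Engel structure D_trans. -/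
open Real

/-- Four vectors form a basis of ℝ⁴. -/
def IsBasis4 (v : Fin 4 → (Fin 4 → ℝ)) : Prop :=
  LinearIndependent ℝ v ∧ Submodule.span ℝ (Set.range v) = ⊤

/-- The vector field `W = ∂_w` on ℝ⁴ with coordinates `(y,x,z,w)`. -/
def Wfield : (Fin 4 → ℝ) → (Fin 4 → ℝ) := fun _ => ![0, 0, 0, 1]

/-- The vector field `X = ∂_z + w∂_x + wz∂_y`, i.e. `(wz, w, 1, 0)`. -/
def Xfield : (Fin 4 → ℝ) → (Fin 4 → ℝ) := fun p => ![p 3 * p 2, p 3, 1, 0]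

/-- The cylinder `S(y,θ) = (y, η_x(θ), η_z(θ), η_w(θ))` over the profile `η`. -/
def Scyl (ηx ηz ηw : ℝ → ℝ) (y θ : ℝ) : Fin 4 → ℝ :=
  ![y, ηx θ, ηz θ, ηw θ]

lemma basis4_of_li (v : Fin 4 → (Fin 4 → ℝ)) (h : LinearIndependent ℝ v) : IsBasis4 v := by
  refine ⟨h, h.span_eq_top_of_card_eq_finrank ?_⟩
  simp [Module.finrank_fintype_fun_eq_card]

/-- Lemma 3.4 (`lem:constantProfile`): if the profile `η = (η_x,η_z,η_w)` is a smooth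
curve positively transverse to `ker(dx − w dz)` in ℝ³, then the cylinder
`S(y,θ) = (y, η(θ))` is everywhere transverse to the standard Engel structure
`D_trans = ⟨W, X⟩`. -/
theorem transverse_cylinder_over_transverse_curve
    (ηx ηz ηw : ℝ → ℝ)
    (hx : ContDiff ℝ (⊤ : ℕ∞) ηx) (hz : ContDiff ℝ (⊤ : ℕ∞) ηz) (hw : ContDiff ℝ (⊤ : ℕ∞) ηw)
    (htrans : ∀ θ : ℝ, 0 < deriv ηx θ - ηw θ * deriv ηz θ) :
    ∀ y θ : ℝ,
      IsBasis4
        ![deriv (fun y' => Scyl ηx ηz ηw y' θ) y,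
          deriv (fun θ' => Scyl ηx ηz ηw y θ') θ,
          Wfield (Scyl ηx ηz ηw y θ),
          Xfield (Scyl ηx ηz ηw y θ)] := by
  intro y θ
  have dx := (hx.differentiable (by simp)).differentiableAt (x := θ)
  have dz := (hz.differentiable (by simp)).differentiableAt (x := θ)
  have dw := (hw.differentiable (by simp)).differentiableAt (x := θ)
  have h1 : deriv (fun y' => Scyl ηx ηz ηw y' θ) y = ![1, 0, 0, 0] := by
    have : HasDerivAt (fun y' => Scyl ηx ηz ηw y' θ) ![1, 0, 0, 0] y := by
      rw [hasDerivAt_pi]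
      intro i
      fin_cases i <;> simp [Scyl] <;>
        first
          | exact hasDerivAt_id y
          | exact hasDerivAt_const _ _
    exact this.deriv
  have h2 : deriv (fun θ' => Scyl ηx ηz ηw y θ') θ
      = ![0, deriv ηx θ, deriv ηz θ, deriv ηw θ] := by
    have : HasDerivAt (fun θ' => Scyl ηx ηz ηw y θ')
        ![0, deriv ηx θ, deriv ηz θ, deriv ηw θ] θ := by
      rw [hasDerivAt_pi]
      intro i
      fin_cases i <;> simp [Scyl]
      · exact hasDerivAt_const _ _
      · exact dx
      · exact dz
      · exact dw
    exact this.deriv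
  rw [h1, h2]
  apply basis4_of_li
  set a := deriv ηx θ
  set b := deriv ηz θ
  set c := deriv ηw θ
  set wv := ηw θ
  set zv := ηz θ
  have hM : IsUnit (Matrix.of ![![(1:ℝ),0,0,0], ![0,a,b,c], ![0,0,0,1], ![wv*zv, wv, 1, 0]]) := by
    rw [Matrix.isUnit_iff_isUnit_det, isUnit_iff_ne_zero]
    simp [Matrix.det_succ_row_zero, Fin.sum_univ_succ]
    nlinarith [htrans θ]
  have hli := Matrix.linearIndependent_rows_iff_isUnit.mpr hM
  have he : (fun i => (Matrix.of ![![(1:ℝ),0,0,0], ![0,a,b,c], ![0,0,0,1],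
      ![wv*zv, wv, 1, 0]]) i)
      = ![![1, 0, 0, 0], ![0, a, b, c], Wfield (Scyl ηx ηz ηw y θ),
          Xfield (Scyl ηx ηz ηw y θ)] := by
    funext i
    fin_cases i <;> funext j <;> fin_cases j <;> simp [Wfield, Xfield, Scyl, wv, zv]
  rw [← he]
  exact hli
end

section
/- Slowly varying rescaling preserves transversality (Lemma 3.6, 'lem:scalingProfile'): Let η = (η_x, η_z, η_w) : ℝ → ℝ³ be a smooth 2π-periodic curve with η_x'(θ) − η_w(θ)·η_z'(θ) > 0 for all θ. Then there exists a constant τ₀ > 0, depending only on η, with the following property: for every smooth function λ : ℝ → (0,1] satisfying |λ'(y)| < τ₀ for all y, the map S : ℝ² → ℝ⁴ defined by S(y,θ) = (y, λ(y)²·η_x(θ), λ(y)·η_z(θ), λ(y)·η_w(θ)) satisfies, at every (y,θ) ∈ ℝ², that the four vectors ∂S/∂y(y,θ), ∂S/∂θ(y,θ), W(S(y,θ)), X(S(y,θ)) form a basis of ℝ⁴. -/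
open Real

/-- The surface `S(y,θ) = ψ_λ(y, η(θ)) = (y, λ(y)²·η_x(θ), λ(y)·η_z(θ), λ(y)·η_w(θ))`. -/
def Syscaled (ηx ηz ηw : ℝ → ℝ) (l : ℝ → ℝ) (y θ : ℝ) : Fin 4 → ℝ :=
  ![y, (l y) ^ 2 * ηx θ, l y * ηz θ, l y * ηw θ]


lemma isBasis4_of_det_ne_zero' (v : Fin 4 → Fin 4 → ℝ)
    (h : (Matrix.of v).det ≠ 0) : IsBasis4 v := by
  have hu : IsUnit (Matrix.of v) := by
    rw [Matrix.isUnit_iff_isUnit_det, isUnit_iff_ne_zero]; exact h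
  have hli : LinearIndependent ℝ v :=
    Matrix.linearIndependent_rows_iff_isUnit.mpr hu
  refine ⟨hli, hli.span_eq_top_of_card_eq_finrank ?_⟩
  simp [Module.finrank_fintype_fun_eq_card]

lemma periodic_deriv' (f : ℝ → ℝ) (hf : Function.Periodic f (2*π)) :
    Function.Periodic (deriv f) (2*π) := by
  intro θ
  have h2 : (fun x => f (x + 2*π)) = f := funext hf
  calc deriv f (θ + 2*π) = deriv (fun x => f (x + 2*π)) θ := (deriv_comp_add_const f _ θ).symm
    _ = deriv f θ := by rw [h2]

/-- Lemma 3.6 (`lem:scalingProfile`): for a smooth 2π-periodic curve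
`η = (η_x,η_z,η_w)` positively transverse to `ker(dx − w dz)` there is a constant
`τ₀ > 0`, depending only on `η`, such that for every smooth `λ : ℝ → (0,1]` with
`|λ'| < τ₀` the surface `S(y,θ) = ψ_λ(y,η(θ))` is everywhere transverse to the
standard Engel structure `D_trans = ⟨W, X⟩`. -/
theorem slowly_varying_scaling_transverse
    (ηx ηz ηw : ℝ → ℝ)
    (hx : ContDiff ℝ (⊤ : ℕ∞) ηx) (hz : ContDiff ℝ (⊤ : ℕ∞) ηz) (hw : ContDiff ℝ (⊤ : ℕ∞) ηw)
    (hper : ∀ θ : ℝ, ηx (θ + 2 * π) = ηx θ ∧ ηz (θ + 2 * π) = ηz θ ∧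
      ηw (θ + 2 * π) = ηw θ)
    (htrans : ∀ θ : ℝ, 0 < deriv ηx θ - ηw θ * deriv ηz θ) :
    ∃ τ₀ > (0:ℝ), ∀ l : ℝ → ℝ, ContDiff ℝ (⊤ : ℕ∞) l →
      (∀ y : ℝ, 0 < l y ∧ l y ≤ 1) →
      (∀ y : ℝ, |deriv l y| < τ₀) →
      ∀ y θ : ℝ,
        IsBasis4
          ![deriv (fun y' => Syscaled ηx ηz ηw l y' θ) y,
            deriv (fun θ' => Syscaled ηx ηz ηw l y θ') θ,
            Wfield (Syscaled ηx ηz ηw l y θ),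
            Xfield (Syscaled ηx ηz ηw l y θ)] := by
  have hdx : Differentiable ℝ ηx := hx.differentiable (by simp)
  have hdz : Differentiable ℝ ηz := hz.differentiable (by simp)
  have hdw : Differentiable ℝ ηw := hw.differentiable (by simp)
  have hcx' : Continuous (deriv ηx) := hx.continuous_deriv (by simp)
  have hcz' : Continuous (deriv ηz) := hz.continuous_deriv (by simp)
  set f : ℝ → ℝ := fun θ => deriv ηx θ - ηw θ * deriv ηz θ with hf_def
  set g : ℝ → ℝ := fun θ =>
    ηw θ * ηz θ * (2 * ηx θ * deriv ηz θ - ηz θ * deriv ηx θ) with hg_def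
  have hcf : Continuous f := hcx'.sub (hw.continuous.mul hcz')
  have hcg : Continuous g := ((hw.continuous.mul hz.continuous).mul
    (((continuous_const.mul hx.continuous).mul hcz').sub (hz.continuous.mul hcx')))
  have hpx : Function.Periodic ηx (2*π) := fun θ => (hper θ).1
  have hpz : Function.Periodic ηz (2*π) := fun θ => (hper θ).2.1
  have hpw : Function.Periodic ηw (2*π) := fun θ => (hper θ).2.2
  have hpx' : Function.Periodic (deriv ηx) (2*π) := periodic_deriv' ηx hpx
  have hpz' : Function.Periodic (deriv ηz) (2*π) := periodic_deriv' ηz hpz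
  have hpf : Function.Periodic f (2*π) := fun θ => by
    simp only [hf_def, hpx' θ, hpz' θ, hpw θ]
  have hpg : Function.Periodic g (2*π) := fun θ => by
    simp only [hg_def, hpx' θ, hpz' θ, hpw θ, hpz θ, hpx θ]
  have h2π : (0:ℝ) < 2*π := by positivity
  have hne : (Set.Icc (0:ℝ) (2*π)).Nonempty := ⟨0, by constructor <;> [rfl; positivity]⟩
  obtain ⟨c, hc, hfc⟩ : ∃ c, 0 < c ∧ ∀ θ, c ≤ f θ := by
    obtain ⟨θ₀, hθ₀, hmin⟩ := isCompact_Icc.exists_isMinOn hne hcf.continuousOn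
    refine ⟨f θ₀, htrans θ₀, fun θ => ?_⟩
    obtain ⟨ψ, hψ, hfψ⟩ := hpf.exists_mem_Ico₀ h2π θ
    rw [hfψ]
    exact hmin ⟨hψ.1, hψ.2.le⟩
  obtain ⟨M, hM, hgM⟩ : ∃ M, 0 ≤ M ∧ ∀ θ, |g θ| ≤ M := by
    obtain ⟨θ₁, hθ₁, hmax⟩ := isCompact_Icc.exists_isMaxOn hne hcg.abs.continuousOn
    refine ⟨|g θ₁|, abs_nonneg _, fun θ => ?_⟩
    obtain ⟨ψ, hψ, hgψ⟩ := hpg.exists_mem_Ico₀ h2π θ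
    rw [hgψ]
    exact hmax ⟨hψ.1, hψ.2.le⟩
  refine ⟨c / (M + 1), by positivity, ?_⟩
  intro l hl hl01 hl' y θ
  have hdl : Differentiable ℝ l := hl.differentiable (by simp)
  -- derivative in y
  have hSy : HasDerivAt (fun y' => Syscaled ηx ηz ηw l y' θ)
      ![1, 2 * l y * deriv l y * ηx θ, deriv l y * ηz θ, deriv l y * ηw θ] y := by
    rw [hasDerivAt_pi]
    intro i
    fin_cases i
    · simp [Syscaled]; exact hasDerivAt_id' y
    · have h1 : HasDerivAt (fun y' => (l y') ^ 2 * ηx θ)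
          ((↑(2:ℕ) * l y ^ (2-1) * deriv l y) * ηx θ) y :=
        ((hdl y).hasDerivAt.pow 2).mul_const (ηx θ)
      have h2 : HasDerivAt (fun y' => (l y') ^ 2 * ηx θ)
          (2 * l y * deriv l y * ηx θ) y := by
        convert h1 using 1; push_cast; ring
      simpa [Syscaled] using h2
    · simpa [Syscaled] using (hdl y).hasDerivAt.mul_const (ηz θ)
    · simpa [Syscaled] using (hdl y).hasDerivAt.mul_const (ηw θ)
  -- derivative in θ
  have hSθ : HasDerivAt (fun θ' => Syscaled ηx ηz ηw l y θ')
      ![0, (l y)^2 * deriv ηx θ, l y * deriv ηz θ, l y * deriv ηw θ] θ := by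
    rw [hasDerivAt_pi]
    intro i
    fin_cases i
    · simpa [Syscaled] using (hasDerivAt_const θ y)
    · simpa [Syscaled] using ((hdx θ).hasDerivAt.const_mul ((l y)^2))
    · simpa [Syscaled] using ((hdz θ).hasDerivAt.const_mul (l y))
    · simpa [Syscaled] using ((hdw θ).hasDerivAt.const_mul (l y))
  rw [hSy.deriv, hSθ.deriv]
  have hW : Wfield (Syscaled ηx ηz ηw l y θ) = ![0,0,0,1] := rfl
  have hX : Xfield (Syscaled ηx ηz ηw l y θ)
      = ![(l y * ηw θ) * (l y * ηz θ), l y * ηw θ, 1, 0] := by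
    simp [Xfield, Syscaled]
  rw [hW, hX]
  apply isBasis4_of_det_ne_zero'
  have hdet : (Matrix.of
      ![![1, 2 * l y * deriv l y * ηx θ, deriv l y * ηz θ, deriv l y * ηw θ],
        ![0, (l y)^2 * deriv ηx θ, l y * deriv ηz θ, l y * deriv ηw θ],
        ![0,0,0,1],
        ![(l y * ηw θ) * (l y * ηz θ), l y * ηw θ, 1, 0]]).det
      = -((l y)^2 * (deriv ηx θ - ηw θ * deriv ηz θ)
          + (l y)^4 * deriv l y *
            (ηw θ * ηz θ * (2 * ηx θ * deriv ηz θ - ηz θ * deriv ηx θ))) := by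
    simp [Matrix.det_succ_row_zero, Fin.sum_univ_succ]
    simp [Fin.succAbove, Fin.lt_def]
    ring
  rw [hdet, neg_ne_zero]
  -- positivity of the determinant expression
  have hA0 : 0 < l y := (hl01 y).1
  have hA1 : l y ≤ 1 := (hl01 y).2
  have hfθ : c ≤ deriv ηx θ - ηw θ * deriv ηz θ := hfc θ
  have hgθ : |ηw θ * ηz θ * (2 * ηx θ * deriv ηz θ - ηz θ * deriv ηx θ)| ≤ M := hgM θ
  have hA'τ : |deriv l y| < c / (M + 1) := hl' y
  have hτM : c / (M + 1) * M < c := by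
    rw [div_mul_eq_mul_div, div_lt_iff₀ (by linarith)]
    nlinarith
  have habs : |(l y)^4 * deriv l y *
      (ηw θ * ηz θ * (2 * ηx θ * deriv ηz θ - ηz θ * deriv ηx θ))|
      ≤ (l y)^2 * (c / (M+1) * M) := by
    rw [abs_mul, abs_mul, abs_pow, abs_of_pos hA0]
    have hA2 : (l y)^2 ≤ 1 := by nlinarith
    have hA42 : (l y)^4 ≤ (l y)^2 := by
      nlinarith [mul_nonneg (pow_pos hA0 2).le (sub_nonneg.mpr hA2)]
    have h2 : (l y)^4 * |deriv l y|
        * |ηw θ * ηz θ * (2 * ηx θ * deriv ηz θ - ηz θ * deriv ηx θ)|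
        ≤ (l y)^2 * (|deriv l y|
          * |ηw θ * ηz θ * (2 * ηx θ * deriv ηz θ - ηz θ * deriv ηx θ)|) := by
      nlinarith [mul_nonneg (sub_nonneg.mpr hA42)
        (mul_nonneg (abs_nonneg (deriv l y))
          (abs_nonneg (ηw θ * ηz θ * (2 * ηx θ * deriv ηz θ - ηz θ * deriv ηx θ))))]
    refine h2.trans ?_
    have h3 : |deriv l y|
        * |ηw θ * ηz θ * (2 * ηx θ * deriv ηz θ - ηz θ * deriv ηx θ)|
        ≤ c / (M+1) * M :=
      mul_le_mul hA'τ.le hgθ (abs_nonneg _) (by positivity)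
    nlinarith
  have hkey : 0 < (l y)^2 * (deriv ηx θ - ηw θ * deriv ηz θ)
      + (l y)^4 * deriv l y *
        (ηw θ * ηz θ * (2 * ηx θ * deriv ηz θ - ηz θ * deriv ηx θ)) := by
    have h3 := neg_abs_le ((l y)^4 * deriv l y *
      (ηw θ * ηz θ * (2 * ηx θ * deriv ηz θ - ηz θ * deriv ηx θ)))
    have h5 : 0 < (l y)^2 * (c - c / (M+1) * M) :=
      mul_pos (pow_pos hA0 2) (by linarith)
    have h6 : (l y)^2 * c ≤ (l y)^2 * (deriv ηx θ - ηw θ * deriv ηz θ) :=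
      mul_le_mul_of_nonneg_left hfθ (pow_pos hA0 2).le
    nlinarith [h3, h5, h6, habs]
  exact hkey.ne'
end

section
/- Explicit transverse torus (Example 3.3, 'ex:explicitParametrisationTorus'): Let r : ℝ → (0,∞) be a smooth positive function satisfying |2·r(y)²·r'(y)| < 1 for all y. Define S : ℝ² → ℝ⁴ by S(y,θ) = (y, r(y)²·sinθ·cosθ, r(y)·sinθ, 2·r(y)·cosθ). Then: (a) for every (y,θ), the four vectors ∂S/∂y(y,θ), ∂S/∂θ(y,θ), W(S(y,θ)), X(S(y,θ)) form a basis of ℝ⁴ (S is transverse to the standard Engel structure D_trans); and (b) S is injective on ℝ × [0, 2π). -/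
open Real

/-- The explicit torus `S(y,θ) = (y, r(y)²·sinθ·cosθ, r(y)·sinθ, 2·r(y)·cosθ)`. -/
noncomputable def Storus (r : ℝ → ℝ) (y θ : ℝ) : Fin 4 → ℝ :=
  ![y, (r y) ^ 2 * sin θ * cos θ, r y * sin θ, 2 * r y * cos θ]

lemma angle_inj {θ θ' : ℝ} (h : θ ∈ Set.Ico 0 (2 * π)) (h' : θ' ∈ Set.Ico 0 (2 * π))
    (hs : sin θ = sin θ') (hc : cos θ = cos θ') : θ = θ' := by
  have hπ := pi_pos
  have sin_zero_cases : ∀ t : ℝ, t ∈ Set.Ico 0 (2 * π) → sin t = 0 → t = 0 ∨ t = π := by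
    intro t ht h0
    obtain ⟨n, hn⟩ := Real.sin_eq_zero_iff.mp h0
    have h1 : (0:ℝ) ≤ n * π := hn ▸ ht.1
    have h2 : (n:ℝ) * π < 2 * π := hn ▸ ht.2
    have hn0 : 0 ≤ n := by
      by_contra hneg
      push_neg at hneg
      have : (n:ℝ) < 0 := by exact_mod_cast hneg
      nlinarith
    have hn2 : n < 2 := by
      by_contra hge
      push_neg at hge
      have : (2:ℝ) ≤ n := by exact_mod_cast hge
      nlinarith
    interval_cases n
    · left; simpa using hn.symm
    · right; simpa using hn.symm
  obtain ⟨k, hk | hk⟩ := Real.cos_eq_cos_iff.mp hc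
  · have hk1 : (-1:ℝ) < k := by nlinarith [h.1, h.2, h'.1, h'.2]
    have hk2 : (k:ℝ) < 1 := by nlinarith [h.1, h.2, h'.1, h'.2]
    have : k = 0 := by
      have : -1 < k ∧ k < 1 := ⟨by exact_mod_cast hk1, by exact_mod_cast hk2⟩
      omega
    subst this
    push_cast at hk
    linarith
  · have hsθ' : sin θ' = - sin θ := by
      rw [hk]
      have : 2 * (k:ℝ) * π - θ = (k:ℝ) * (2*π) - θ := by ring
      rw [this, Real.sin_int_mul_two_pi_sub]
    have hs0 : sin θ = 0 := by linarith
    have hs0' : sin θ' = 0 := by rw [← hs]; exact hs0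
    rcases sin_zero_cases θ h hs0 with rfl | rfl <;>
      rcases sin_zero_cases θ' h' hs0' with rfl | rfl
    · rfl
    · exfalso; rw [Real.cos_zero, Real.cos_pi] at hc; linarith
    · exfalso; rw [Real.cos_zero, Real.cos_pi] at hc; linarith
    · rfl

lemma deriv_y (r : ℝ → ℝ) (hr : Differentiable ℝ r) (y θ : ℝ) :
    deriv (fun y' => Storus r y' θ) y =
      ![1, 2 * r y * deriv r y * sin θ * cos θ, deriv r y * sin θ, 2 * deriv r y * cos θ] := by
  have hrd : HasDerivAt r (deriv r y) y := (hr y).hasDerivAt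
  refine HasDerivAt.deriv ?_
  rw [hasDerivAt_pi]
  intro i
  fin_cases i <;> simp [Storus]
  · exact hasDerivAt_id y
  · convert ((hrd.pow 2).mul_const (sin θ)).mul_const (cos θ) using 1
    · rfl
    · rfl
    · norm_num
  · exact hrd.mul_const (sin θ)
  · convert (hrd.const_mul 2).mul_const (cos θ) using 1

lemma deriv_θ (r : ℝ → ℝ) (y θ : ℝ) :
    deriv (fun θ' => Storus r y θ') θ =
      ![0, (r y) ^ 2 * (cos θ ^ 2 - sin θ ^ 2), r y * cos θ, -(2 * r y * sin θ)] := by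
  refine HasDerivAt.deriv ?_
  rw [hasDerivAt_pi]
  intro i
  fin_cases i <;> simp [Storus]
  · exact hasDerivAt_const θ y
  · convert (((Real.hasDerivAt_sin θ).const_mul ((r y)^2)).mul (Real.hasDerivAt_cos θ)) using 1
    · rfl
    · rfl
    · ring
  · convert (Real.hasDerivAt_sin θ).const_mul (r y) using 1
  · convert (Real.hasDerivAt_cos θ).const_mul (2 * r y) using 1
    · rfl
    · ring

/-- Example 3.3 (`ex:explicitParametrisationTorus`): for a smooth positive function `r`
with `|2·r(y)²·r'(y)| < 1`, the map `S(y,θ) = (y, r(y)²sinθcosθ, r(y)sinθ, 2r(y)cosθ)`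
is (a) everywhere transverse to the standard Engel structure `D_trans = ⟨W, X⟩`, and
(b) injective on `ℝ × [0,2π)`. -/
theorem explicit_transverse_torus
    (r : ℝ → ℝ) (hr : ContDiff ℝ (⊤ : ℕ∞) r) (hpos : ∀ y : ℝ, 0 < r y)
    (hslope : ∀ y : ℝ, |2 * (r y) ^ 2 * deriv r y| < 1) :
    (∀ y θ : ℝ,
      IsBasis4
        ![deriv (fun y' => Storus r y' θ) y,
          deriv (fun θ' => Storus r y θ') θ,
          Wfield (Storus r y θ),
          Xfield (Storus r y θ)]) ∧
    (∀ y y' θ θ' : ℝ, θ ∈ Set.Ico 0 (2 * π) → θ' ∈ Set.Ico 0 (2 * π) →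
      Storus r y θ = Storus r y' θ' → y = y' ∧ θ = θ') := by
  constructor
  · intro y θ
    have hD : Differentiable ℝ r := hr.differentiable (by simp)
    have hW : Wfield (Storus r y θ) = ![0, 0, 0, 1] := rfl
    have hX : Xfield (Storus r y θ)
        = ![2 * r y * cos θ * (r y * sin θ), 2 * r y * cos θ, 1, 0] := by
      simp [Xfield, Storus]
    rw [deriv_y r hD y θ, deriv_θ r y θ, hW, hX]
    set M : Matrix (Fin 4) (Fin 4) ℝ := Matrix.of
      ![![1, 2 * r y * deriv r y * sin θ * cos θ, deriv r y * sin θ, 2 * deriv r y * cos θ],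
        ![0, (r y) ^ 2 * (cos θ ^ 2 - sin θ ^ 2), r y * cos θ, -(2 * r y * sin θ)],
        ![0, 0, 0, 1],
        ![2 * r y * cos θ * (r y * sin θ), 2 * r y * cos θ, 1, 0]] with hM
    have hdet : M.det = (r y)^2 * (1 - 2 * (r y)^2 * deriv r y * (sin θ ^ 2 * cos θ)) := by
      rw [hM]
      simp [Matrix.det_succ_row_zero, Fin.sum_univ_succ, Fin.succAbove]
      linear_combination ((r y)^2 - 2*(r y)^4*deriv r y*sin θ^2*cos θ) * (sin_sq_add_cos_sq θ)
    have hfac : 2 * (r y)^2 * deriv r y * (sin θ ^ 2 * cos θ) < 1 := by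
      have hb : |sin θ ^ 2 * cos θ| ≤ 1 := by
        rw [abs_mul, abs_of_nonneg (sq_nonneg (sin θ))]
        exact mul_le_one₀ (sin_sq_le_one θ) (abs_nonneg _) (abs_cos_le_one θ)
      calc 2 * (r y)^2 * deriv r y * (sin θ ^ 2 * cos θ)
          ≤ |2 * (r y)^2 * deriv r y * (sin θ ^ 2 * cos θ)| := le_abs_self _
        _ = |2 * (r y)^2 * deriv r y| * |sin θ ^ 2 * cos θ| := abs_mul _ _
        _ ≤ |2 * (r y)^2 * deriv r y| * 1 :=
            mul_le_mul_of_nonneg_left hb (abs_nonneg _)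
        _ = |2 * (r y)^2 * deriv r y| := mul_one _
        _ < 1 := hslope y
    have hdet_ne : M.det ≠ 0 := by
      rw [hdet]
      have h1 : (0:ℝ) < (r y)^2 := pow_pos (hpos y) 2
      have h2 : (0:ℝ) < 1 - 2 * (r y)^2 * deriv r y * (sin θ ^ 2 * cos θ) := by linarith
      exact (mul_pos h1 h2).ne'
    have hli : LinearIndependent ℝ (fun i => M i) :=
      Matrix.linearIndependent_rows_iff_isUnit.mpr
        ((Matrix.isUnit_iff_isUnit_det _).mpr (isUnit_iff_ne_zero.mpr hdet_ne))
    refine ⟨hli, hli.span_eq_top_of_card_eq_finrank ?_⟩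
    simp [Module.finrank_fin_fun]
  · intro y y' θ θ' hθ hθ' hEq
    have h0 := congrFun hEq 0
    have h2 := congrFun hEq 2
    have h3 := congrFun hEq 3
    simp only [Storus, Matrix.cons_val_zero, Matrix.cons_val_two, Matrix.tail_cons,
      Matrix.head_cons, Matrix.cons_val_three, Matrix.cons_val_one] at h0 h2 h3
    subst h0
    have hrne : r y ≠ 0 := (hpos y).ne'
    have hsin : sin θ = sin θ' := mul_left_cancel₀ hrne h2
    have hcos : cos θ = cos θ' := by
      have h3' : r y * cos θ = r y * cos θ' := by linarith
      exact mul_left_cancel₀ hrne h3'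
    exact ⟨rfl, angle_inj hθ hθ' hsin hcos⟩
end
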